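/- Let M:(ℝ,≤)²→vect_F be a pointwise finite-dimensional persistence module admitting a finite convex isotopy subdivision of (ℝ,≤)² subordinate to M. Define N:(ℝ,≤)²→vect_F by: for every chamber J and every j∈J, Nj = lim_J M; and for j₁ ≤ j₂ lying in chambers J₁ and J₂ respectively, N(j₁≤j₂) is the identity on lim_J M if J := J₁ = J₂, and otherwise the canonical map φ_{J₁J₂}: lim_{J₁}M → lim_{J₂}M induced by M. Then M ≅ N as persistence modules. -/
import Mathlib


/-- A persistence module over a preorder `P` with coefficients in a field `F`:
a functor `(P,≤) → Vect_F`, given by vector spaces `V p` and linear maps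
`map : i ≤ j → (V i →ₗ[F] V j)` satisfying the functoriality equations. -/
structure PersistenceModule (F : Type) [Field F] (P : Type) [Preorder P] where
  V : P → Type
  [addCommGroup : ∀ p, AddCommGroup (V p)]
  [module : ∀ p, Module F (V p)]
  map : ∀ {i j : P}, i ≤ j → (V i →ₗ[F] V j)
  map_id : ∀ i : P, map (le_refl i) = LinearMap.id
  map_comp : ∀ {i j k : P} (hij : i ≤ j) (hjk : j ≤ k),
    (map hjk).comp (map hij) = map (hij.trans hjk)

attribute [instance] PersistenceModule.addCommGroup PersistenceModule.module

/-- A zigzag path `a - x₁ - ⋯ - xₙ - b` in a preorder, where each consecutive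
pair of points is comparable. -/
inductive Zigzag (P : Type) [Preorder P] : P → P → Type
  | single (a : P) : Zigzag P a a
  | consLe {a b c : P} (h : a ≤ b) (p : Zigzag P b c) : Zigzag P a c
  | consGe {a b c : P} (h : b ≤ a) (p : Zigzag P b c) : Zigzag P a c

/-- Convexity of a subset of a poset: `i ≤ j ≤ k` with `i, k ∈ J` implies `j ∈ J`. -/
def PosetConvex {P : Type} [Preorder P] (J : Set P) : Prop :=
  ∀ i ∈ J, ∀ k ∈ J, ∀ j : P, i ≤ j → j ≤ k → j ∈ J

/-- Connectedness: any two points of `J` are joined by a finite zigzag path inside `J`. -/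
def ZigzagConnected {P : Type} [Preorder P] (J : Set P) : Prop :=
  ∀ a b : J, Nonempty (Zigzag (↥J) a b)

/-- Restriction of a persistence module to a subset of the parameter poset. -/
def PersistenceModule.restrict {F : Type} [Field F] {P : Type} [Preorder P]
    (M : PersistenceModule F P) (J : Set P) : PersistenceModule F ↥J where
  V i := M.V ↑i
  map {i j} h := M.map (show (i : P) ≤ (j : P) from h)
  map_id i := M.map_id ↑i
  map_comp _ _ := M.map_comp _ _

/-- `L` together with the legs `σ` is a limit cone over the persistence module `M`. -/
def IsLimitCone {F : Type} [Field F] {P : Type} [Preorder P] (M : PersistenceModule F P)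
    (L : Type) [AddCommGroup L] [Module F L] (σ : ∀ i : P, L →ₗ[F] M.V i) : Prop :=
  (∀ (i j : P) (h : i ≤ j), (M.map h).comp (σ i) = σ j) ∧
  ∀ (N : Type) [AddCommGroup N] [Module F N] (τ : ∀ i : P, N →ₗ[F] M.V i),
    (∀ (i j : P) (h : i ≤ j), (M.map h).comp (τ i) = τ j) →
    ∃! φ : N →ₗ[F] L, ∀ i : P, (σ i).comp φ = τ i

/-- Isomorphism of persistence modules: a family of linear equivalences commuting
with the structure maps. -/
def IsIsomorphic {F : Type} [Field F] {P : Type} [Preorder P]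
    (M N : PersistenceModule F P) : Prop :=
  ∃ f : ∀ p, M.V p ≃ₗ[F] N.V p, ∀ (i j : P) (h : i ≤ j),
    (N.map h).comp (f i).toLinearMap = (f j).toLinearMap.comp (M.map h)

namespace Statement9Proof

open Function

/-- Staircase chains in `J`: `a ≤ Q₁ ≥ v₁ ≤ Q₂ ≥ v₂ ⋯ ≤ Qₖ ≥ b`. -/
inductive SC (J : Set (ℝ × ℝ)) : ℝ × ℝ → ℝ × ℝ → Type where
  | nil (a : ℝ × ℝ) (ha : a ∈ J) : SC J a a
  | cons {b c : ℝ × ℝ} (a Q : ℝ × ℝ) (ha : a ∈ J) (hQ : Q ∈ J)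
      (h1 : a ≤ Q) (h2 : b ≤ Q) (t : SC J b c) : SC J a c

namespace SC

variable {J : Set (ℝ × ℝ)}

def len : {a b : ℝ × ℝ} → SC J a b → ℕ
  | _, _, nil _ _ => 0
  | _, _, cons _ _ _ _ _ _ t => t.len + 1

@[simp] lemma len_nil (a : ℝ × ℝ) (ha : a ∈ J) : (SC.nil a ha).len = 0 := rfl

@[simp] lemma len_cons {w b : ℝ × ℝ} (a Q : ℝ × ℝ) (ha hQ h1 h2) (t : SC J w b) :
    (SC.cons a Q ha hQ h1 h2 t).len = t.len + 1 := rfl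

def vlist : {a b : ℝ × ℝ} → SC J a b → List (ℝ × ℝ)
  | _, _, nil a _ => [a]
  | _, _, cons a _ _ _ _ _ t => a :: t.vlist

def plist : {a b : ℝ × ℝ} → SC J a b → List (ℝ × ℝ)
  | _, _, nil _ _ => []
  | _, _, cons _ Q _ _ _ _ t => Q :: t.plist

def startMem : {a b : ℝ × ℝ} → SC J a b → a ∈ J
  | _, _, nil _ ha => ha
  | _, _, cons _ _ ha _ _ _ _ => ha

def endMem : {a b : ℝ × ℝ} → SC J a b → b ∈ J
  | _, _, nil _ ha => ha
  | _, _, cons _ _ _ _ _ _ t => t.endMem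

variable {a b : ℝ × ℝ}

lemma vlist_length (c : SC J a b) : c.vlist.length = c.len + 1 := by
  induction c with
  | nil => rfl
  | cons a Q ha hQ h1 h2 t ih => simp [vlist, len, ih]

/-- `i`-th valley, with default `b`. -/
def val (c : SC J a b) (i : ℕ) : ℝ × ℝ := c.vlist.getD i b

lemma val_zero (c : SC J a b) : c.val 0 = a := by
  cases c <;> rfl

lemma val_cons {b' c' : ℝ × ℝ} (a Q : ℝ × ℝ) (ha hQ h1 h2) (t : SC J b' c') (i : ℕ) :
    (SC.cons a Q ha hQ h1 h2 t).val (i + 1) = t.val i := by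
  simp only [val, vlist, List.getD_cons_succ]

lemma val_last (c : SC J a b) : c.val c.len = b := by
  induction c with
  | nil => rfl
  | cons a Q ha hQ h1 h2 t ih =>
    show (SC.cons a Q ‹_› ‹_› ‹_› ‹_› t).val (t.len + 1) = _
    rw [val_cons]; exact ih

lemma val_mem (c : SC J a b) (i : ℕ) : c.val i ∈ J := by
  induction c generalizing i with
  | nil a ha => cases i with
    | zero => exact ha
    | succ n => simpa [val, vlist] using ha
  | cons a Q ha hQ h1 h2 t ih =>
    cases i with
    | zero => rw [val_zero]; exact ha
    | succ n => rw [val_cons]; exact ih n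

end SC

end Statement9Proof
namespace Statement9Proof

open Function

variable {F : Type} [Field F]
variable (M : PersistenceModule F (ℝ × ℝ)) {J : Set (ℝ × ℝ)}
variable (hiso : ∀ {x y : ℝ × ℝ}, x ∈ J → y ∈ J → ∀ h : x ≤ y, Function.Bijective (M.map h))

/-- The isomorphism `M(x ≤ y)` for `x ≤ y` inside `J`. -/
noncomputable def E {x y : ℝ × ℝ} (hx : x ∈ J) (hy : y ∈ J) (h : x ≤ y) :
    M.V x ≃ₗ[F] M.V y :=
  LinearEquiv.ofBijective (M.map h) (hiso hx hy h)

lemma E_apply {x y : ℝ × ℝ} (hx : x ∈ J) (hy : y ∈ J) (h : x ≤ y) (u : M.V x) :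
    E M hiso hx hy h u = M.map h u := rfl

lemma map_map {x y z : ℝ × ℝ} (h1 : x ≤ y) (h2 : y ≤ z) (u : M.V x) :
    M.map h2 (M.map h1 u) = M.map (h1.trans h2) u := by
  rw [← LinearMap.comp_apply, M.map_comp]

lemma E_E {x y z : ℝ × ℝ} (hx : x ∈ J) (hy : y ∈ J) (hz : z ∈ J)
    (h1 : x ≤ y) (h2 : y ≤ z) (u : M.V x) :
    E M hiso hy hz h2 (E M hiso hx hy h1 u) = E M hiso hx hz (h1.trans h2) u :=
  map_map M h1 h2 u

lemma E_refl_apply {x : ℝ × ℝ} (hx : x ∈ J) (h : x ≤ x) (u : M.V x) :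
    E M hiso hx hx h u = u := by
  have := M.map_id x
  calc E M hiso hx hx h u = M.map (le_refl x) u := rfl
  _ = u := by rw [this]; rfl

/-- proof-irrelevance-style: E doesn't depend on the inequality proof (they're equal anyway)
and symm cancellation. -/
lemma E_symm_apply {x y : ℝ × ℝ} (hx : x ∈ J) (hy : y ∈ J) (h : x ≤ y)
    (u : M.V x) : (E M hiso hx hy h).symm (E M hiso hx hy h u) = u :=
  (E M hiso hx hy h).symm_apply_apply u

/-- Core: lowering a peak. If `x, v ≤ Q' ≤ Q` then going up to `Q` and down to `v`
equals going up to `Q'` and down. -/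
lemma peak_lower {x v Q' Q : ℝ × ℝ} (hx : x ∈ J) (hv : v ∈ J) (hQ' : Q' ∈ J) (hQ : Q ∈ J)
    (hxQ : x ≤ Q) (hvQ : v ≤ Q) (hxQ' : x ≤ Q') (hvQ' : v ≤ Q') (hQ'Q : Q' ≤ Q) (u : M.V x) :
    (E M hiso hv hQ hvQ).symm (E M hiso hx hQ hxQ u)
      = (E M hiso hv hQ' hvQ').symm (E M hiso hx hQ' hxQ' u) := by
  apply (E M hiso hv hQ hvQ).injective
  rw [(E M hiso hv hQ hvQ).apply_symm_apply]
  have h1 : E M hiso hv hQ hvQ ((E M hiso hv hQ' hvQ').symm (E M hiso hx hQ' hxQ' u))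
      = E M hiso hQ' hQ hQ'Q (E M hiso hv hQ' hvQ'
          ((E M hiso hv hQ' hvQ').symm (E M hiso hx hQ' hxQ' u))) := by
    rw [E_E]
  rw [h1, (E M hiso hv hQ' hvQ').apply_symm_apply, E_E]

/-- Going up from `x` to `Q` and down to `y`, when `x ≤ y`, is just `M(x ≤ y)`. -/
lemma up_down {x y Q : ℝ × ℝ} (hx : x ∈ J) (hy : y ∈ J) (hQ : Q ∈ J)
    (hxy : x ≤ y) (hxQ : x ≤ Q) (hyQ : y ≤ Q) (u : M.V x) :
    (E M hiso hy hQ hyQ).symm (E M hiso hx hQ hxQ u) = E M hiso hx hy hxy u := by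
  apply (E M hiso hy hQ hyQ).injective
  rw [(E M hiso hy hQ hyQ).apply_symm_apply, E_E]

/-- Raising a valley `w` to `w'` below both adjacent peaks. -/
lemma valley_raise {x w w' Q₁ Q₂ : ℝ × ℝ} (hx : x ∈ J) (hw : w ∈ J) (hw' : w' ∈ J)
    (hQ₁ : Q₁ ∈ J) (hQ₂ : Q₂ ∈ J) (hxQ₁ : x ≤ Q₁) (hwQ₁ : w ≤ Q₁) (hw'Q₁ : w' ≤ Q₁)
    (hwQ₂ : w ≤ Q₂) (hw'Q₂ : w' ≤ Q₂) (hww' : w ≤ w') (u : M.V x) :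
    E M hiso hw' hQ₂ hw'Q₂ ((E M hiso hw' hQ₁ hw'Q₁).symm (E M hiso hx hQ₁ hxQ₁ u))
      = E M hiso hw hQ₂ hwQ₂ ((E M hiso hw hQ₁ hwQ₁).symm (E M hiso hx hQ₁ hxQ₁ u)) := by
  have h0 : (E M hiso hw' hQ₁ hw'Q₁).symm (E M hiso hx hQ₁ hxQ₁ u)
      = E M hiso hw hw' hww' ((E M hiso hw hQ₁ hwQ₁).symm (E M hiso hx hQ₁ hxQ₁ u)) := by
    apply (E M hiso hw' hQ₁ hw'Q₁).injective
    rw [(E M hiso hw' hQ₁ hw'Q₁).apply_symm_apply, E_E,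
      (E M hiso hw hQ₁ (hww'.trans hw'Q₁)).apply_symm_apply]
  rw [h0, E_E]

end Statement9Proof
namespace Statement9Proof

open Function

variable {F : Type} [Field F]
variable (M : PersistenceModule F (ℝ × ℝ)) {J : Set (ℝ × ℝ)}
variable (hiso : ∀ {x y : ℝ × ℝ}, x ∈ J → y ∈ J → ∀ h : x ≤ y, Function.Bijective (M.map h))

/-- Composite isomorphism along a staircase chain. -/
noncomputable def scomp : {a b : ℝ × ℝ} → (c : SC J a b) → (M.V a ≃ₗ[F] M.V b)
  | _, _, .nil _ _ => LinearEquiv.refl F _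
  | _, _, .cons a Q ha hQ h1 h2 t =>
      ((E M hiso ha hQ h1).trans (E M hiso t.startMem hQ h2).symm).trans (scomp t)

lemma scomp_cons_apply {w b : ℝ × ℝ} (a Q : ℝ × ℝ) (ha hQ h1 h2) (t : SC J w b) (u : M.V a) :
    scomp M hiso (SC.cons a Q ha hQ h1 h2 t) u
      = scomp M hiso t ((E M hiso t.startMem hQ h2).symm (E M hiso ha hQ h1 u)) := rfl

lemma scomp_nil_apply (a : ℝ × ℝ) (ha : a ∈ J) (u : M.V a) :
    scomp M hiso (SC.nil a ha) u = u := rfl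

/-- peak predicate: the `i`-th peak. -/
def SC.pk {a b : ℝ × ℝ} (c : SC J a b) (i : ℕ) : ℝ × ℝ := c.plist.getD i b

/-- "peaks are joins of adjacent valleys". -/
def PJ {a b : ℝ × ℝ} (c : SC J a b) : Prop :=
  ∀ i, i < c.len → c.pk i = c.val i ⊔ c.val (i + 1)

/-- "interior valleys are meets of the joins of their neighbours" (tightness). -/
def TV {a b : ℝ × ℝ} (c : SC J a b) : Prop :=
  ∀ i, i + 2 ≤ c.len →
    c.val (i + 1) = (c.val i ⊔ c.val (i + 1)) ⊓ (c.val (i + 1) ⊔ c.val (i + 2))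

lemma box (hconv : PosetConvex J) {p q r : ℝ × ℝ} (hp : p ∈ J) (hq : q ∈ J)
    (h1 : p ≤ r) (h2 : r ≤ q) : r ∈ J :=
  hconv p hp q hq r h1 h2

section lists
variable {a b : ℝ × ℝ}

lemma plist_length (c : SC J a b) : c.plist.length = c.len := by
  induction c with
  | nil => rfl
  | cons a Q ha hQ h1 h2 t ih => simp [SC.plist, SC.len, ih]

lemma pk_zero {w : ℝ × ℝ} (a Q : ℝ × ℝ) (ha hQ h1 h2) (t : SC J w b) :
    (SC.cons a Q ha hQ h1 h2 t).pk 0 = Q := rfl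

lemma pk_cons {w : ℝ × ℝ} (a Q : ℝ × ℝ) (ha hQ h1 h2) (t : SC J w b) (i : ℕ) :
    (SC.cons a Q ha hQ h1 h2 t).pk (i + 1) = t.pk i := by
  simp only [SC.pk, SC.plist, List.getD_cons_succ]

end lists

/-- Sweep 1: make all peaks joins, keeping valleys. -/
lemma exists_pj (hconv : PosetConvex J) : ∀ {a b : ℝ × ℝ} (c : SC J a b),
    ∃ c' : SC J a b, c'.len = c.len ∧ (∀ u, scomp M hiso c' u = scomp M hiso c u) ∧
      PJ c' ∧ c'.vlist = c.vlist := by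
  intro a b c
  induction c with
  | nil a ha =>
    exact ⟨SC.nil a ha, rfl, fun u => rfl, fun i hi => by simp [SC.len_nil, SC.len_cons] at hi, rfl⟩
  | @cons w b a Q ha hQ h1 h2 t ih =>
    obtain ⟨t', hlen, hsc, hpj, hvl⟩ := ih
    have hQ'Q : a ⊔ w ≤ Q := sup_le h1 h2
    have hQ' : a ⊔ w ∈ J := box hconv ha hQ le_sup_left hQ'Q
    refine ⟨SC.cons a (a ⊔ w) ha hQ' le_sup_left le_sup_right t', ?_, ?_, ?_, ?_⟩
    · simp [SC.len, hlen]
    · intro u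
      rw [scomp_cons_apply, scomp_cons_apply, hsc]
      congr 1
      exact (peak_lower M hiso ha t.startMem hQ' hQ h1 h2 le_sup_left le_sup_right hQ'Q u).symm
    · intro i hi
      cases i with
      | zero =>
        rw [pk_zero]
        rw [SC.val_zero, SC.val_cons]
        have : t'.val 0 = w := SC.val_zero t'
        rw [this]
      | succ n =>
        rw [pk_cons, SC.val_cons, SC.val_cons]
        refine hpj n ?_
        simp [SC.len_nil, SC.len_cons] at hi; omega
    · simp [SC.vlist, hvl]

/-- Sweep 2: given peaks-are-joins, raise interior valleys to make the chain tight,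
keeping the peaks. -/
lemma exists_tv (hconv : PosetConvex J) : ∀ (n : ℕ) {a b : ℝ × ℝ} (c : SC J a b), c.len ≤ n → PJ c →
    ∃ c' : SC J a b, c'.len = c.len ∧ (∀ u, scomp M hiso c' u = scomp M hiso c u) ∧
      PJ c' ∧ TV c' ∧ c'.plist = c.plist := by
  intro n
  induction n with
  | zero =>
    intro a b c hn hpj
    exact ⟨c, rfl, fun u => rfl, hpj, fun i hi => by omega, rfl⟩
  | succ n IH =>
    intro a b c hn hpj
    cases c with
    | nil a ha => exact ⟨.nil a ha, rfl, fun u => rfl, hpj, fun i hi => by simp [SC.len_nil, SC.len_cons] at hi, rfl⟩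
    | @cons w bb a Q₁ ha hQ₁ h1 h2 t =>
      cases t with
      | nil _ hw =>
        exact ⟨_, rfl, fun u => rfl, hpj, fun i hi => by simp [SC.len_nil, SC.len_cons] at hi, rfl⟩
      | @cons z bb2 w2 Q₂ hw hQ₂ g1 g2 t₂ =>
        -- interior valley w raised to w' = Q₁ ⊓ Q₂
        set w' : ℝ × ℝ := Q₁ ⊓ Q₂ with hw'def
        have hww' : w ≤ w' := le_inf h2 g1
        have hw' : w' ∈ J := box hconv hw hQ₁ hww' inf_le_left
        -- facts from PJ c
        have hQ1join : Q₁ = a ⊔ w := by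
          have := hpj 0 (by simp [SC.len_nil, SC.len_cons])
          rw [pk_zero, SC.val_zero, SC.val_cons, SC.val_zero] at this; exact this
        have hQ2join : Q₂ = w ⊔ z := by
          have := hpj 1 (by simp [SC.len_nil, SC.len_cons])
          rw [pk_cons, pk_zero, SC.val_cons, SC.val_cons, SC.val_zero, SC.val_cons,
            SC.val_zero] at this
          exact this
        have hzQ₂ : z ≤ Q₂ := by rw [hQ2join]; exact le_sup_right
        set inner : SC J w' b := SC.cons w' Q₂ hw' hQ₂ inf_le_right g2 t₂ with hinnerdef
        have hinnerlen : inner.len ≤ n := by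
          rw [hinnerdef]
          simp only [SC.len_nil, SC.len_cons] at hn ⊢; omega
        have hQ2join' : Q₂ = w' ⊔ z := by
          apply le_antisymm
          · rw [hQ2join]; exact sup_le (hww'.trans le_sup_left) le_sup_right
          · exact sup_le inf_le_right hzQ₂
        have hinnerpj : PJ inner := by
          intro i hi
          cases i with
          | zero =>
            rw [hinnerdef, pk_zero, SC.val_zero, SC.val_cons]
            have : t₂.val 0 = z := SC.val_zero t₂
            rw [this]; exact hQ2join'
          | succ m =>
            rw [hinnerdef, pk_cons, SC.val_cons, SC.val_cons]
            have := hpj (m + 2) (by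
              simp only [hinnerdef, SC.len_nil, SC.len_cons] at hi ⊢; omega)
            rw [pk_cons, pk_cons, SC.val_cons, SC.val_cons, SC.val_cons, SC.val_cons] at this
            exact this
        obtain ⟨c'', hlen'', hsc'', hpj'', htv'', hpl''⟩ := IH inner hinnerlen hinnerpj
        have hc''start : c''.val 0 = w' := SC.val_zero c''
        have hclen : c''.len = t₂.len + 1 := by rw [hlen'', hinnerdef]; rfl
        -- the result
        refine ⟨SC.cons a Q₁ ha hQ₁ h1 inf_le_left c'', ?_, ?_, ?_, ?_, ?_⟩
        · simp only [SC.len_cons, hclen]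
        · intro u
          rw [scomp_cons_apply, scomp_cons_apply, hsc'']
          rw [hinnerdef, scomp_cons_apply]
          exact congrArg _ (congrArg _
            (valley_raise M hiso ha hw hw' hQ₁ hQ₂ h1 h2 inf_le_left g1 inf_le_right hww' u))
        · intro i hi
          cases i with
          | zero =>
            rw [pk_zero, SC.val_zero, SC.val_cons, hc''start]
            apply le_antisymm
            · rw [hQ1join]; exact sup_le le_sup_left (hww'.trans le_sup_right)
            · exact sup_le h1 inf_le_left
          | succ m =>
            rw [pk_cons, SC.val_cons, SC.val_cons]
            refine hpj'' m ?_
            simp only [SC.len_cons, hclen] at hi ⊢; omega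
        · intro i hi
          cases i with
          | zero =>
            rw [SC.val_zero, SC.val_cons, SC.val_cons, hc''start]
            have hval1 : c''.val 1 = c''.pk 0 ⊓ c''.pk 1 ∨ True := Or.inr trivial
            -- tightness at the first interior valley: w' = (a ⊔ w') ⊓ (w' ⊔ z')
            have haw' : a ⊔ w' = Q₁ := by
              apply le_antisymm
              · exact sup_le h1 inf_le_left
              · rw [hQ1join]; exact sup_le le_sup_left (hww'.trans le_sup_right)
            have hpk0 : c''.pk 0 = Q₂ := by
              rw [SC.pk, hpl'', hinnerdef]; rfl
            have hw'z' : w' ⊔ c''.val 1 = Q₂ := by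
              have := hpj'' 0 (by simp only [hclen]; omega)
              rw [hpk0, hc''start] at this
              exact this.symm
            rw [haw', hw'z']
          | succ m =>
            rw [SC.val_cons, SC.val_cons, SC.val_cons]
            refine htv'' m ?_
            simp only [SC.len, hlen'', hinnerdef] at hi ⊢; omega
        · simp only [SC.plist, hpl'', hinnerdef]

end Statement9Proof
namespace Statement9Proof

open Function

variable {F : Type} [Field F]
variable (M : PersistenceModule F (ℝ × ℝ)) {J : Set (ℝ × ℝ)}
variable (hiso : ∀ {x y : ℝ × ℝ}, x ∈ J → y ∈ J → ∀ h : x ≤ y, Function.Bijective (M.map h))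

/-- Dropping a comparable interior valley shortens the chain. -/
lemma exists_drop : ∀ {a b : ℝ × ℝ} (c : SC J a b) (i : ℕ), i + 2 ≤ c.len →
    (c.val i ≤ c.val (i + 1) ∨ c.val (i + 2) ≤ c.val (i + 1)) →
    ∃ c' : SC J a b, c'.len < c.len ∧ ∀ u, scomp M hiso c' u = scomp M hiso c u := by
  intro a b c
  induction c with
  | nil a ha => intro i hi; simp [SC.len_nil, SC.len_cons] at hi
  | @cons w bb a Q₁ ha hQ₁ h1 h2 t ih =>
    intro i hi hcomp
    cases t with
    | nil _ hw => simp [SC.len_nil, SC.len_cons] at hi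
    | @cons z bb2 w2 Q₂ hw hQ₂ g1 g2 t₂ =>
      cases i with
      | zero =>
        simp only [SC.val_zero, SC.val_cons] at hcomp
        cases hcomp with
        | inl haw =>
          refine ⟨SC.cons a Q₂ ha hQ₂ (haw.trans g1) g2 t₂, ?_, ?_⟩
          · simp [SC.len_nil, SC.len_cons]
          · intro u
            rw [scomp_cons_apply, scomp_cons_apply, scomp_cons_apply]
            apply congrArg
            apply congrArg
            rw [up_down M hiso ha hw hQ₁ haw h1 h2, E_E]
        | inr hzw =>
          refine ⟨SC.cons a Q₁ ha hQ₁ h1 (hzw.trans h2) t₂, ?_, ?_⟩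
          · simp [SC.len_nil, SC.len_cons]
          · intro u
            rw [scomp_cons_apply, scomp_cons_apply, scomp_cons_apply]
            apply congrArg
            apply (E M hiso t₂.startMem hQ₂ g2).injective
            rw [(E M hiso t₂.startMem hQ₂ g2).apply_symm_apply]
            have hr : (E M hiso hw hQ₁ h2).symm (E M hiso ha hQ₁ h1 u)
                = E M hiso t₂.startMem hw hzw
                    ((E M hiso t₂.startMem hQ₁ (hzw.trans h2)).symm (E M hiso ha hQ₁ h1 u)) := by
              apply (E M hiso hw hQ₁ h2).injective
              rw [(E M hiso hw hQ₁ h2).apply_symm_apply, E_E,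
                (E M hiso t₂.startMem hQ₁ (hzw.trans h2)).apply_symm_apply]
            rw [hr, E_E]
      | succ i' =>
        have hi' : i' + 2 ≤ (SC.cons w Q₂ hw hQ₂ g1 g2 t₂).len := by
          simp only [SC.len_nil, SC.len_cons] at hi ⊢; omega
        simp only [SC.val_cons] at hcomp
        obtain ⟨t', hlt, hsc⟩ := ih i' hi' hcomp
        refine ⟨SC.cons a Q₁ ha hQ₁ h1 h2 t', ?_, ?_⟩
        · simp only [SC.len_nil, SC.len_cons] at hlt ⊢; omega
        · intro u
          rw [scomp_cons_apply, scomp_cons_apply, hsc]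

/-- The hook `a ≤ Q₁ ≥ w ≤ Q₂ ≥ b` with `w ≤ a`, `w ≤ b`, `a ≤ b` also shortens. -/
lemma exists_hook {a b : ℝ × ℝ} (c : SC J a b) (hlen : c.len = 2)
    (h1 : c.val 1 ≤ c.val 0) (h2 : c.val 1 ≤ c.val 2) (hab : a ≤ b) :
    ∃ c' : SC J a b, c'.len < c.len ∧ ∀ u, scomp M hiso c' u = scomp M hiso c u := by
  cases c with
  | nil a ha => simp [SC.len_nil, SC.len_cons] at hlen
  | @cons w bb a Q₁ ha hQ₁ hh1 hh2 t =>
    cases t with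
    | nil _ hw => simp [SC.len_nil, SC.len_cons] at hlen
    | @cons z bb2 w2 Q₂ hw hQ₂ g1 g2 t₂ =>
      cases t₂ with
      | cons => simp [SC.len_nil, SC.len_cons] at hlen
      | nil _ hb =>
        simp only [SC.val_cons, SC.val_zero] at h1 h2
        refine ⟨SC.cons a b ha hb hab le_rfl (SC.nil b hb), by simp [SC.len_nil, SC.len_cons], ?_⟩
        intro u
        rw [scomp_cons_apply, scomp_cons_apply, scomp_cons_apply,
          scomp_nil_apply, scomp_nil_apply]
        rw [up_down M hiso ha hb hb hab hab le_rfl]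
        have e1 : (E M hiso hw hQ₁ hh2).symm (E M hiso ha hQ₁ hh1 u)
            = (E M hiso hw ha h1).symm u := by
          conv_lhs => rw [← (E M hiso hw ha h1).apply_symm_apply u, E_E]
          exact (E M hiso hw hQ₁ _).symm_apply_apply _
        rw [e1]
        have e2 : E M hiso hw hQ₂ g1 ((E M hiso hw ha h1).symm u)
            = E M hiso hb hQ₂ g2 (E M hiso hw hb h2 ((E M hiso hw ha h1).symm u)) :=
          (E_E M hiso hw hb hQ₂ h2 g2 _).symm
        rw [e2, (E M hiso hb hQ₂ g2).symm_apply_apply]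
        conv_lhs => rw [← (E M hiso hw ha h1).apply_symm_apply u]
        rw [E_E]

/-- Base case: a single pair with comparable endpoints. -/
lemma scomp_len_one {a b : ℝ × ℝ} (c : SC J a b) (hlen : c.len = 1) (hab : a ≤ b)
    (u : M.V a) :
    scomp M hiso c u = E M hiso c.startMem c.endMem hab u := by
  cases c with
  | nil a ha => simp [SC.len_nil, SC.len_cons] at hlen
  | @cons w bb a Q₁ ha hQ₁ hh1 hh2 t =>
    cases t with
    | cons => simp [SC.len_nil, SC.len_cons] at hlen
    | nil _ hb =>
      rw [scomp_cons_apply, scomp_nil_apply]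
      exact up_down M hiso ha hb hQ₁ hab hh1 hh2 u

end Statement9Proof
namespace Statement9Proof

/-- step `j` goes strictly right-down. -/
def PosS (V : ℕ → ℝ × ℝ) (j : ℕ) : Prop :=
  (V j).1 < (V (j+1)).1 ∧ (V (j+1)).2 < (V j).2

/-- step `j` goes strictly left-up. -/
def NegS (V : ℕ → ℝ × ℝ) (j : ℕ) : Prop :=
  (V (j+1)).1 < (V j).1 ∧ (V j).2 < (V (j+1)).2

lemma minmax {p x q : ℝ} (h : x = (p ⊔ x) ⊓ (x ⊔ q)) : p ≤ x ∨ q ≤ x := by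
  by_contra hc
  push_neg at hc
  have h1 : x < p ⊔ x := lt_of_lt_of_le hc.1 le_sup_left
  have h2 : x < x ⊔ q := lt_of_lt_of_le hc.2 le_sup_right
  have := lt_inf_iff.mpr ⟨h1, h2⟩
  rw [← h] at this
  exact lt_irrefl x this

lemma strict_incomp {u v : ℝ × ℝ} (h1 : ¬u ≤ v) (h2 : ¬v ≤ u) :
    (u.1 < v.1 ∧ v.2 < u.2) ∨ (v.1 < u.1 ∧ u.2 < v.2) := by
  rw [Prod.le_def, not_and_or, not_le, not_le] at h1 h2
  rcases h1 with h1 | h1 <;> rcases h2 with h2 | h2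
  · exact absurd h2 (not_lt.mpr h1.le)
  · exact Or.inr ⟨h1, h2⟩
  · exact Or.inl ⟨h2, h1⟩
  · exact absurd h2 (not_lt.mpr h1.le)

lemma flipS {V : ℕ → ℝ × ℝ} {j : ℕ}
    (tx : (V j).1 ≤ (V (j+1)).1 ∨ (V (j+2)).1 ≤ (V (j+1)).1)
    (ty : (V j).2 ≤ (V (j+1)).2 ∨ (V (j+2)).2 ≤ (V (j+1)).2)
    (s2 : PosS V (j+1) ∨ NegS V (j+1)) :
    (PosS V j → PosS V (j+1)) ∧ (NegS V j → NegS V (j+1)) := by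
  unfold PosS NegS at *
  constructor
  · intro hp
    rcases s2 with s2 | s2
    · exact s2
    · exfalso
      rcases ty with ty | ty
      · linarith [hp.2]
      · linarith [s2.2]
  · intro hn
    rcases s2 with s2 | s2
    · exfalso
      rcases tx with tx | tx
      · linarith [hn.1]
      · linarith [s2.1]
    · exact s2

lemma run_pos {V : ℕ → ℝ × ℝ} {m : ℕ}
    (TXY : ∀ j, j ≤ m → ((V j).1 ≤ (V (j+1)).1 ∨ (V (j+2)).1 ≤ (V (j+1)).1) ∧
      ((V j).2 ≤ (V (j+1)).2 ∨ (V (j+2)).2 ≤ (V (j+1)).2))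
    (p q : ℕ) (hq : q ≤ m + 1)
    (hSI : ∀ j, p ≤ j → j ≤ q → PosS V j ∨ NegS V j)
    (hp : PosS V p) :
    ∀ j, p ≤ j → j ≤ q → PosS V j := by
  intro j hpj hjq
  induction j, hpj using Nat.le_induction with
  | base => exact hp
  | succ n hn ih =>
    have hnm : n ≤ m := by omega
    have := flipS (TXY n hnm).1 (TXY n hnm).2 (hSI (n+1) (by omega) hjq)
    rcases hSI n hn (by omega) with hs | hs
    · exact this.1 (ih (by omega))
    · exact absurd (this.2 hs) (by
        intro hneg
        have hpos := ih (by omega)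
        exact absurd hpos (by
          intro hp'
          exact lt_irrefl _ (hp'.1.trans hs.1)))

lemma run_neg {V : ℕ → ℝ × ℝ} {m : ℕ}
    (TXY : ∀ j, j ≤ m → ((V j).1 ≤ (V (j+1)).1 ∨ (V (j+2)).1 ≤ (V (j+1)).1) ∧
      ((V j).2 ≤ (V (j+1)).2 ∨ (V (j+2)).2 ≤ (V (j+1)).2))
    (p q : ℕ) (hq : q ≤ m + 1)
    (hSI : ∀ j, p ≤ j → j ≤ q → PosS V j ∨ NegS V j)
    (hp : NegS V p) :
    ∀ j, p ≤ j → j ≤ q → NegS V j := by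
  intro j hpj hjq
  induction j, hpj using Nat.le_induction with
  | base => exact hp
  | succ n hn ih =>
    have hnm : n ≤ m := by omega
    have := flipS (TXY n hnm).1 (TXY n hnm).2 (hSI (n+1) (by omega) hjq)
    rcases hSI n hn (by omega) with hs | hs
    · exfalso
      have hneg := ih (by omega)
      exact lt_irrefl _ (hs.1.trans hneg.1)
    · exact this.2 (ih (by omega))

lemma dec_y {V : ℕ → ℝ × ℝ} (p q : ℕ) (hpq : p ≤ q)
    (hPos : ∀ j, p ≤ j → j ≤ q → PosS V j) : (V (q+1)).2 < (V p).2 := by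
  induction q, hpq using Nat.le_induction with
  | base => exact (hPos p le_rfl le_rfl).2
  | succ n hn ih =>
    have h1 : (V (n+2)).2 < (V (n+1)).2 := (hPos (n+1) (by omega) le_rfl).2
    have h2 : (V (n+1)).2 < (V p).2 := ih (fun j h1 h2 => hPos j h1 (by omega))
    linarith

lemma dec_x {V : ℕ → ℝ × ℝ} (p q : ℕ) (hpq : p ≤ q)
    (hNeg : ∀ j, p ≤ j → j ≤ q → NegS V j) : (V (q+1)).1 < (V p).1 := by
  induction q, hpq using Nat.le_induction with
  | base => exact (hNeg p le_rfl le_rfl).1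
  | succ n hn ih =>
    have h1 : (V (n+2)).1 < (V (n+1)).1 := (hNeg (n+1) (by omega) le_rfl).1
    have h2 : (V (n+1)).1 < (V p).1 := ih (fun j h1 h2 => hNeg j h1 (by omega))
    linarith

/-- The geometric heart: a tight irreducible staircase with comparable endpoints
(and not the short hook) cannot exist. -/
lemma coord (m : ℕ) (V : ℕ → ℝ × ℝ)
    (T : ∀ i, i ≤ m → V (i+1) = (V i ⊔ V (i+1)) ⊓ (V (i+1) ⊔ V (i+2)))
    (R : ∀ i, i ≤ m → ¬(V i ≤ V (i+1)) ∧ ¬(V (i+2) ≤ V (i+1)))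
    (hE : V 0 ≤ V (m+2))
    (NH : ¬(m = 0 ∧ V 1 ≤ V 0 ∧ V 1 ≤ V 2)) : False := by
  have TXY : ∀ j, j ≤ m → ((V j).1 ≤ (V (j+1)).1 ∨ (V (j+2)).1 ≤ (V (j+1)).1) ∧
      ((V j).2 ≤ (V (j+1)).2 ∨ (V (j+2)).2 ≤ (V (j+1)).2) := by
    intro j hj
    have h := T j hj
    constructor
    · apply minmax
      have := congrArg Prod.fst h
      simpa [Prod.sup_def, Prod.inf_def] using this
    · apply minmax
      have := congrArg Prod.snd h
      simpa [Prod.sup_def, Prod.inf_def] using this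
  -- strict incomparability of the middle steps
  have SImid : ∀ j, 1 ≤ j → j ≤ m → PosS V j ∨ NegS V j := by
    intro j h1 h2
    obtain ⟨j', rfl⟩ := Nat.exists_eq_add_of_le h1
    have ha := (R (1 + j') (by omega)).1
    have hb := (R j' (by omega)).2
    have hb' : ¬ V (1 + j' + 1) ≤ V (1 + j') := by
      convert hb using 3 <;> omega
    exact strict_incomp ha hb'
  have hEx : (V 0).1 ≤ (V (m+2)).1 := hE.1
  have hEy : (V 0).2 ≤ (V (m+2)).2 := hE.2
  by_cases c1 : V 1 ≤ V 0 <;> by_cases c2 : V (m+1) ≤ V (m+2)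
  · -- both ends comparable
    rcases Nat.eq_zero_or_pos m with rfl | hm
    · exact NH ⟨rfl, c1, c2⟩
    · have hSI : ∀ j, 1 ≤ j → j ≤ m → PosS V j ∨ NegS V j := SImid
      rcases hSI 1 le_rfl hm with hs | hs
      · have hall := run_pos TXY 1 m (by omega) hSI hs
        have hd : (V (m+1)).2 < (V 1).2 := dec_y 1 m hm hall
        have hty := (TXY m le_rfl).2
        rcases hty with hty | hty
        · exact absurd hty (not_le.mpr (hall m hm le_rfl).2)
        · have : (V (m+2)).2 ≤ (V (m+1)).2 := hty
          have hc1y : (V 1).2 ≤ (V 0).2 := c1.2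
          linarith
      · have hall := run_neg TXY 1 m (by omega) hSI hs
        have hd : (V (m+1)).1 < (V 1).1 := dec_x 1 m hm hall
        have htx := (TXY m le_rfl).1
        rcases htx with htx | htx
        · exact absurd htx (not_le.mpr (hall m hm le_rfl).1)
        · have : (V (m+2)).1 ≤ (V (m+1)).1 := htx
          have hc1x : (V 1).1 ≤ (V 0).1 := c1.1
          linarith
  · -- start descends, end strictly incomparable
    have hSI : ∀ j, 1 ≤ j → j ≤ m + 1 → PosS V j ∨ NegS V j := by
      intro j h1 h2
      rcases Nat.lt_or_ge j (m+1) with h | h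
      · exact SImid j h1 (by omega)
      · have : j = m + 1 := by omega
        subst this
        exact strict_incomp c2 (R m le_rfl).2
    rcases hSI 1 le_rfl (by omega) with hs | hs
    · have hall := run_pos TXY 1 (m+1) le_rfl hSI hs
      have hd : (V (m+2)).2 < (V 1).2 := dec_y 1 (m+1) (by omega) hall
      have hc1y : (V 1).2 ≤ (V 0).2 := c1.2
      clear c2; linarith
    · have hall := run_neg TXY 1 (m+1) le_rfl hSI hs
      have hd : (V (m+2)).1 < (V 1).1 := dec_x 1 (m+1) (by omega) hall
      have hc1x : (V 1).1 ≤ (V 0).1 := c1.1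
      clear c2; linarith
  · -- start strictly incomparable, end ascends
    have hSI : ∀ j, j ≤ m → PosS V j ∨ NegS V j := by
      intro j hj
      rcases Nat.eq_zero_or_pos j with rfl | h1
      · exact strict_incomp (R 0 (by omega)).1 c1
      · exact SImid j h1 hj
    rcases hSI 0 (by omega) with hs | hs
    · have hall := run_pos TXY 0 m (by omega) (fun j _ hj => hSI j hj) hs
      have hd : (V (m+1)).2 < (V 0).2 := dec_y 0 m (by omega) hall
      have hty := (TXY m le_rfl).2
      rcases hty with hty | hty
      · exact absurd hty (not_le.mpr (hall m (by omega) le_rfl).2)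
      · have : (V (m+2)).2 ≤ (V (m+1)).2 := hty
        clear c1; linarith
    · have hall := run_neg TXY 0 m (by omega) (fun j _ hj => hSI j hj) hs
      have hd : (V (m+1)).1 < (V 0).1 := dec_x 0 m (by omega) hall
      have htx := (TXY m le_rfl).1
      rcases htx with htx | htx
      · exact absurd htx (not_le.mpr (hall m (by omega) le_rfl).1)
      · have : (V (m+2)).1 ≤ (V (m+1)).1 := htx
        clear c1; linarith
  · -- both ends strictly incomparable
    have hSI : ∀ j, j ≤ m + 1 → PosS V j ∨ NegS V j := by
      intro j hj
      rcases Nat.eq_zero_or_pos j with rfl | h1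
      · exact strict_incomp (R 0 (by omega)).1 c1
      · rcases Nat.lt_or_ge j (m+1) with h | h
        · exact SImid j h1 (by omega)
        · have : j = m + 1 := by omega
          subst this
          exact strict_incomp c2 (R m le_rfl).2
    rcases hSI 0 (by omega) with hs | hs
    · have hall := run_pos TXY 0 (m+1) le_rfl (fun j _ hj => hSI j hj) hs
      have hd : (V (m+2)).2 < (V 0).2 := dec_y 0 (m+1) (by omega) hall
      clear c1 c2; linarith
    · have hall := run_neg TXY 0 (m+1) le_rfl (fun j _ hj => hSI j hj) hs
      have hd : (V (m+2)).1 < (V 0).1 := dec_x 0 (m+1) (by omega) hall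
      clear c1 c2; linarith

end Statement9Proof
namespace Statement9Proof

open Function

variable {F : Type} [Field F]
variable (M : PersistenceModule F (ℝ × ℝ)) {J : Set (ℝ × ℝ)}
variable (hiso : ∀ {x y : ℝ × ℝ}, x ∈ J → y ∈ J → ∀ h : x ≤ y, Function.Bijective (M.map h))

lemma E_refl_symm_apply {x : ℝ × ℝ} (hx : x ∈ J) (h : x ≤ x) (u : M.V x) :
    (E M hiso hx hx h).symm u = u := by
  apply (E M hiso hx hx h).injective
  rw [(E M hiso hx hx h).apply_symm_apply, E_refl_apply]

/-- Main lemma: the composite along any staircase chain between comparable endpoints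
is the structure map. -/
lemma main (hconv : PosetConvex J) : ∀ (n : ℕ) {a b : ℝ × ℝ} (c : SC J a b),
    c.len ≤ n → ∀ (hab : a ≤ b) (u : M.V a),
    scomp M hiso c u = E M hiso c.startMem c.endMem hab u := by
  intro n
  induction n with
  | zero =>
    intro a b c hn hab u
    cases c with
    | nil a ha => rw [scomp_nil_apply]; exact (E_refl_apply M hiso ha hab u).symm
    | cons a Q ha hQ h1 h2 t => simp [SC.len_cons] at hn
  | succ n IH =>
    intro a b c hn hab u
    obtain ⟨c1, hlen1, hsc1, hpj1, hvl1⟩ := exists_pj M hiso hconv c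
    obtain ⟨c2, hlen2, hsc2, hpj2, htv2, hpl2⟩ :=
      exists_tv M hiso hconv c1.len c1 le_rfl hpj1
    rw [← hsc1 u, ← hsc2 u]
    cases hL : c2.len with
    | zero =>
      cases c2 with
      | nil a' ha' => rw [scomp_nil_apply]; exact (E_refl_apply M hiso ha' hab u).symm
      | cons a' Q' ha' hQ' h1' h2' t' => simp [SC.len_cons] at hL
    | succ l =>
      cases l with
      | zero => exact scomp_len_one M hiso c2 hL hab u
      | succ k =>
        by_cases hdrop : ∃ i, i + 2 ≤ c2.len ∧
            (c2.val i ≤ c2.val (i+1) ∨ c2.val (i+2) ≤ c2.val (i+1))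
        · obtain ⟨i, hi, hcomp⟩ := hdrop
          obtain ⟨c3, hlt, hsc3⟩ := exists_drop M hiso c2 i hi hcomp
          rw [← hsc3 u]
          have h3 : c3.len ≤ n := by omega
          exact IH c3 h3 hab u
        · by_cases hhook : c2.len = 2 ∧ c2.val 1 ≤ c2.val 0 ∧ c2.val 1 ≤ c2.val 2
          · obtain ⟨hl2, hh1, hh2⟩ := hhook
            obtain ⟨c3, hlt, hsc3⟩ := exists_hook M hiso c2 hl2 hh1 hh2 hab
            rw [← hsc3 u]
            have h3 : c3.len ≤ n := by omega
            exact IH c3 h3 hab u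
          · exfalso
            push_neg at hdrop
            refine coord k c2.val ?_ ?_ ?_ ?_
            · intro i him
              exact htv2 i (by omega)
            · intro i him
              exact hdrop i (by omega)
            · have h0 : c2.val 0 = a := SC.val_zero c2
              have hlast : c2.val (k + 2) = b := by
                have := SC.val_last c2
                rwa [hL] at this
              rw [h0, hlast]; exact hab
            · rintro ⟨hm0, hg1, hg2⟩
              exact hhook ⟨by omega, hg1, hg2⟩

def snoc : {a b : ℝ × ℝ} → SC J a b → {d : ℝ × ℝ} → (hd : d ∈ J) → b ≤ d → SC J a d
  | _, _, .nil a ha, d, hd, hbd => .cons a d ha hd hbd le_rfl (.nil d hd)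
  | _, _, .cons a Q ha hQ h1 h2 t, _, hd, hbd => .cons a Q ha hQ h1 h2 (snoc t hd hbd)

lemma scomp_snoc : ∀ {a b : ℝ × ℝ} (c : SC J a b) {d : ℝ × ℝ} (hd : d ∈ J)
    (hbd : b ≤ d) (u : M.V a),
    scomp M hiso (snoc c hd hbd) u = E M hiso c.endMem hd hbd (scomp M hiso c u) := by
  intro a b c
  induction c with
  | nil a ha =>
    intro d hd hbd u
    rw [scomp_nil_apply]
    show scomp M hiso (SC.cons a d ha hd hbd le_rfl (SC.nil d hd)) u = _
    rw [scomp_cons_apply, scomp_nil_apply]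
    exact E_refl_symm_apply M hiso hd le_rfl _
  | cons a Q ha hQ h1 h2 t ih =>
    intro d hd hbd u
    show scomp M hiso (SC.cons a Q ha hQ h1 h2 (snoc t hd hbd)) u = _
    rw [scomp_cons_apply, scomp_cons_apply]
    have hsm : (snoc t hd hbd).startMem = t.startMem := rfl
    rw [hsm, ih]

def append : {a b : ℝ × ℝ} → SC J a b → {d : ℝ × ℝ} → SC J b d → SC J a d
  | _, _, .nil _ _, _, c2 => c2
  | _, _, .cons a Q ha hQ h1 h2 t, _, c2 => .cons a Q ha hQ h1 h2 (append t c2)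

lemma scomp_append : ∀ {a b : ℝ × ℝ} (c1 : SC J a b) {d : ℝ × ℝ} (c2 : SC J b d)
    (u : M.V a),
    scomp M hiso (append c1 c2) u = scomp M hiso c2 (scomp M hiso c1 u) := by
  intro a b c1
  induction c1 with
  | nil a ha => intro d c2 u; rfl
  | cons a Q ha hQ h1 h2 t ih =>
    intro d c2 u
    show scomp M hiso (SC.cons a Q ha hQ h1 h2 (append t c2)) u = _
    rw [scomp_cons_apply, scomp_cons_apply]
    have hsm : (append t c2).startMem = t.startMem := rfl
    rw [hsm, ih]

def rev : {a b : ℝ × ℝ} → SC J a b → SC J b a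
  | _, _, .nil a ha => .nil a ha
  | _, _, .cons a Q ha hQ h1 h2 t =>
      append (rev t) (.cons _ Q t.startMem hQ h2 h1 (.nil a ha))

/-- Path independence. -/
lemma path_ind (hconv : PosetConvex J) {a b : ℝ × ℝ} (c c' : SC J a b) (u : M.V a) :
    scomp M hiso c u = scomp M hiso c' u := by
  have key : ∀ (cc : SC J a b) (v : M.V a),
      scomp M hiso (rev c') (scomp M hiso cc v) = scomp M hiso (append cc (rev c')) v :=
    fun cc v => (scomp_append M hiso cc (rev c') v).symm
  have h1 : scomp M hiso (append c (rev c')) u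
      = E M hiso (append c (rev c')).startMem (append c (rev c')).endMem le_rfl u :=
    main M hiso hconv (append c (rev c')).len _ le_rfl le_rfl u
  have h2 : scomp M hiso (append c' (rev c')) u
      = E M hiso (append c' (rev c')).startMem (append c' (rev c')).endMem le_rfl u :=
    main M hiso hconv (append c' (rev c')).len _ le_rfl le_rfl u
  apply (scomp M hiso (rev c')).injective
  show scomp M hiso (rev c') (scomp M hiso c u) = scomp M hiso (rev c') (scomp M hiso c' u)
  rw [key c u, key c' u, h1, h2]

end Statement9Proof
namespace Statement9Proof

/-- Convert a zigzag in `J` to a staircase chain. -/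
def zigzagToSC {J : Set (ℝ × ℝ)} : {a b : ↥J} → Zigzag ↥J a b → SC J ↑a ↑b
  | _, _, .single a => .nil ↑a a.2
  | _, _, .consLe (b := b') h p => .cons _ ↑b' (by exact Subtype.coe_prop _) b'.2 h le_rfl (zigzagToSC p)
  | a, _, .consGe h p => .cons ↑a ↑a a.2 a.2 le_rfl h (zigzagToSC p)

end Statement9Proof

open Statement9Proof in
theorem statement9' (F : Type) [Field F] (M : PersistenceModule F (ℝ × ℝ))
    (hfd : ∀ j, FiniteDimensional F (M.V j))
    (C : ℝ × ℝ → Set (ℝ × ℝ))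
    (hmem : ∀ j, j ∈ C j)
    (hpart : ∀ j k, k ∈ C j → C k = C j)
    (hfin : (Set.range C).Finite)
    (hconn : ∀ j, ZigzagConnected (C j))
    (hconv : ∀ j, PosetConvex (C j))
    (hiso : ∀ (j x y : ℝ × ℝ), x ∈ C j → y ∈ C j → ∀ h : x ≤ y,
      Function.Bijective (M.map h))
    (N : PersistenceModule F (ℝ × ℝ))
    (σ : ∀ (j : ℝ × ℝ) (i : ↥(C j)), N.V j →ₗ[F] M.V ↑i)
    (hlim : ∀ j : ℝ × ℝ, IsLimitCone (M.restrict (C j)) (N.V j) (σ j))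
    (hNmap : ∀ (j₁ j₂ : ℝ × ℝ) (h : j₁ ≤ j₂) (a : ↥(C j₁)) (b : ↥(C j₂))
      (hab : (a : ℝ × ℝ) ≤ (b : ℝ × ℝ)),
      (σ j₂ b).comp (N.map h) = (M.map hab).comp (σ j₁ a)) :
    IsIsomorphic M N := by
  classical
  have hisoJ : ∀ p : ℝ × ℝ, ∀ {x y : ℝ × ℝ}, x ∈ C p → y ∈ C p → ∀ h : x ≤ y,
      Function.Bijective (M.map h) := fun p {x y} hx hy h => hiso p x y hx hy h
  -- chains from p to any point of its chamber
  have hchain : ∀ (p : ℝ × ℝ) (i : ↥(C p)), Nonempty (SC (C p) p ↑i) := by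
    intro p i
    obtain ⟨z⟩ := hconn p ⟨p, hmem p⟩ i
    exact ⟨zigzagToSC z⟩
  -- absorption of legs along chains
  have habs : ∀ (p : ℝ × ℝ) {x y : ℝ × ℝ} (c : SC (C p) x y) (v : N.V p),
      scomp M (hisoJ p) c (σ p ⟨x, c.startMem⟩ v) = σ p ⟨y, c.endMem⟩ v := by
    intro p x y c
    induction c with
    | nil a ha => intro v; rfl
    | @cons w bb a Q ha hQ h1 h2 t ih =>
      intro v
      rw [scomp_cons_apply]
      have hcompat : ∀ (i j : ↥(C p)) (h : i ≤ j) (v : N.V p),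
          M.map (show (i : ℝ × ℝ) ≤ (j : ℝ × ℝ) from h) (σ p i v) = σ p j v := by
        intro i j h v
        exact LinearMap.congr_fun ((hlim p).1 i j h) v
      have e1 : E M (hisoJ p) ha hQ h1 (σ p ⟨a, ha⟩ v) = σ p ⟨Q, hQ⟩ v :=
        hcompat ⟨a, ha⟩ ⟨Q, hQ⟩ h1 v
      have e2 : (E M (hisoJ p) t.startMem hQ h2).symm (σ p ⟨Q, hQ⟩ v)
          = σ p ⟨w, t.startMem⟩ v := by
        apply (E M (hisoJ p) t.startMem hQ h2).injective
        rw [(E M (hisoJ p) t.startMem hQ h2).apply_symm_apply]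
        exact (hcompat ⟨w, t.startMem⟩ ⟨Q, hQ⟩ h2 v).symm
      rw [e1, e2, ih]
  -- the legs at the base point are bijective
  have hbij : ∀ p : ℝ × ℝ, Function.Bijective (σ p ⟨p, hmem p⟩) := by
    intro p
    set i₀ : ↥(C p) := ⟨p, hmem p⟩ with hi₀
    have gchain : ∀ i : ↥(C p), SC (C p) p ↑i := fun i => (hchain p i).some
    set τ : ∀ i : ↥(C p), M.V p →ₗ[F] M.V ↑i :=
      fun i => (scomp M (hisoJ p) (gchain i)).toLinearMap with hτ
    have hcone : ∀ (i j : ↥(C p)) (h : i ≤ j),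
        (((M.restrict (C p)).map h).comp (τ i)) = τ j := by
      intro i j h
      apply LinearMap.ext
      intro v
      show M.map (show (i : ℝ × ℝ) ≤ (j : ℝ × ℝ) from h) (scomp M (hisoJ p) (gchain i) v)
        = scomp M (hisoJ p) (gchain j) v
      have h1 : M.map (show (i : ℝ × ℝ) ≤ (j : ℝ × ℝ) from h)
            (scomp M (hisoJ p) (gchain i) v)
          = scomp M (hisoJ p) (snoc (gchain i) j.2 h) v :=
        (scomp_snoc M (hisoJ p) (gchain i) j.2 h v).symm
      rw [h1]
      exact path_ind M (hisoJ p) (hconv p) (snoc (gchain i) j.2 h) (gchain j) v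
    obtain ⟨φ, hφ, -⟩ := (hlim p).2 (M.V p) τ hcone
    have hright : ∀ x : M.V p, σ p i₀ (φ x) = x := by
      intro x
      have h1 : σ p i₀ (φ x) = τ i₀ x := LinearMap.congr_fun (hφ i₀) x
      rw [h1, hτ]
      show scomp M (hisoJ p) (gchain i₀) x = x
      rw [path_ind M (hisoJ p) (hconv p) (gchain i₀) (SC.nil p (hmem p)) x]
      rfl
    have hleft : ∀ v : N.V p, φ (σ p i₀ v) = v := by
      have hσcone := (hlim p).1
      obtain ⟨φ', hφ', huniq⟩ := (hlim p).2 (N.V p) (σ p) hσcone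
      have hid : LinearMap.id = φ' := huniq LinearMap.id (fun i => LinearMap.comp_id _)
      have hψ : φ.comp (σ p i₀) = φ' := by
        apply huniq
        intro i
        apply LinearMap.ext
        intro v
        show σ p i (φ (σ p i₀ v)) = σ p i v
        have h1 : σ p i (φ (σ p i₀ v)) = τ i (σ p i₀ v) :=
          LinearMap.congr_fun (hφ i) (σ p i₀ v)
        rw [h1, hτ]
        show scomp M (hisoJ p) (gchain i) (σ p i₀ v) = σ p i v
        have h2 := habs p (gchain i) v
        exact h2
      intro v
      have : φ.comp (σ p i₀) = LinearMap.id := hψ.trans hid.symm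
      exact LinearMap.congr_fun this v
    exact Function.bijective_iff_has_inverse.mpr ⟨φ, hleft, hright⟩
  -- assemble the isomorphism
  set g : ∀ p : ℝ × ℝ, N.V p ≃ₗ[F] M.V p :=
    fun p => LinearEquiv.ofBijective (σ p ⟨p, hmem p⟩) (hbij p) with hg
  refine ⟨fun p => (g p).symm, ?_⟩
  intro i j h
  apply LinearMap.ext
  intro x
  show N.map h ((g i).symm x) = (g j).symm (M.map h x)
  apply (g j).injective
  rw [(g j).apply_symm_apply]
  have hN : g j (N.map h ((g i).symm x)) = M.map h (g i ((g i).symm x)) := by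
    show σ j ⟨j, hmem j⟩ (N.map h ((g i).symm x)) = M.map h (σ i ⟨i, hmem i⟩ ((g i).symm x))
    exact LinearMap.congr_fun (hNmap i j h ⟨i, hmem i⟩ ⟨j, hmem j⟩ h) ((g i).symm x)
  rw [hN, (g i).apply_symm_apply]

/-- Let `M` be a p.f.d. persistence module on `(ℝ,≤)²` admitting a
finite convex isotopy subdivision (encoded by the chamber map `C`, sending each point
to its chamber). If `N` is a persistence module which on each point `j` is a limit of
`M` over the chamber of `j` (with limit-cone legs `σ j`) and whose structure maps are
the canonical maps `φ_{J₁J₂}` between the limits, then `M ≅ N`. -/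
theorem statement9 (F : Type) [Field F] (M : PersistenceModule F (ℝ × ℝ))
    (hfd : ∀ j, FiniteDimensional F (M.V j))
    (C : ℝ × ℝ → Set (ℝ × ℝ))
    (hmem : ∀ j, j ∈ C j)
    (hpart : ∀ j k, k ∈ C j → C k = C j)
    (hfin : (Set.range C).Finite)
    (hconn : ∀ j, ZigzagConnected (C j))
    (hconv : ∀ j, PosetConvex (C j))
    (hiso : ∀ (j x y : ℝ × ℝ), x ∈ C j → y ∈ C j → ∀ h : x ≤ y,
      Function.Bijective (M.map h))
    (N : PersistenceModule F (ℝ × ℝ))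
    (σ : ∀ (j : ℝ × ℝ) (i : ↥(C j)), N.V j →ₗ[F] M.V ↑i)
    (hlim : ∀ j : ℝ × ℝ, IsLimitCone (M.restrict (C j)) (N.V j) (σ j))
    (hNmap : ∀ (j₁ j₂ : ℝ × ℝ) (h : j₁ ≤ j₂) (a : ↥(C j₁)) (b : ↥(C j₂))
      (hab : (a : ℝ × ℝ) ≤ (b : ℝ × ℝ)),
      (σ j₂ b).comp (N.map h) = (M.map hab).comp (σ j₁ a)) :
    IsIsomorphic M N := by
  exact statement9' F M hfd C hmem hpart hfin hconn hconv hiso N σ hlim hNmap
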